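/- Let P be a curve of m ≥ 1 points in ℝ^d and δ > 0. Then the minimum length of a curve Π with dFr(P,Π) ≤ δ equals the minimum number t such that P can be partitioned into t consecutive nonempty blocks, each contained in a closed Euclidean ball of radius δ. -/

import Mathlib

noncomputable section

abbrev Pt (d : ℕ) : Type := EuclideanSpace ℝ (Fin d)

/-- Cost contribution of a single pair of blocks: the maximum distance between a point
of `A` and a point of `B` (0 if one of them is empty). -/
def pairCost {d : ℕ} (A B : List (Pt d)) : ℝ :=
  (A.map fun p => (B.map fun q => dist p q).foldr max 0).foldr max 0

/-- `ω` is a paired walk along `P` and `Q`: the first components partition `P` into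
consecutive nonempty blocks, the second components partition `Q`, and in each pair at
least one block is a single point. -/
def IsPairedWalk {d : ℕ} (ω : List (List (Pt d) × List (Pt d))) (P Q : List (Pt d)) : Prop :=
  (ω.map Prod.fst).flatten = P ∧ (ω.map Prod.snd).flatten = Q ∧
    ∀ pr ∈ ω, pr.1 ≠ [] ∧ pr.2 ≠ [] ∧ (pr.1.length = 1 ∨ pr.2.length = 1)

/-- The cost of a paired walk: the maximum over its pairs of the maximum distance between
matched points. -/
def walkCost {d : ℕ} (ω : List (List (Pt d) × List (Pt d))) : ℝ :=
  (ω.map fun pr => pairCost pr.1 pr.2).foldr max 0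

/-- The discrete Fréchet distance: the minimum cost over all paired walks along `P` and `Q`. -/
def dFr {d : ℕ} (P Q : List (Pt d)) : ℝ :=
  sInf {c : ℝ | ∃ ω, IsPairedWalk ω P Q ∧ walkCost ω = c}

lemma foldr_max_nonneg (l : List ℝ) : 0 ≤ l.foldr max 0 := by
  induction l with
  | nil => simp
  | cons a t ih => exact le_max_of_le_right ih

lemma le_foldr_max {l : List ℝ} {a : ℝ} (h : a ∈ l) : a ≤ l.foldr max 0 := by
  induction l with
  | nil => simp at h
  | cons b t ih =>
    rcases List.mem_cons.mp h with h | h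
    · subst h; exact le_max_left _ _
    · exact le_max_of_le_right (ih h)

lemma foldr_max_le {l : List ℝ} {c : ℝ} (hc : 0 ≤ c) (h : ∀ a ∈ l, a ≤ c) :
    l.foldr max 0 ≤ c := by
  induction l with
  | nil => simpa
  | cons b t ih =>
    exact max_le (h b (.head _)) (ih fun a ha => h a (.tail _ ha))

lemma foldr_max_mem (l : List ℝ) : l.foldr max 0 = 0 ∨ l.foldr max 0 ∈ l := by
  induction l with
  | nil => simp
  | cons b t ih =>
    rcases max_choice b (t.foldr max 0) with h | h
    · right; rw [List.foldr_cons, h]; exact .head _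
    · rw [List.foldr_cons, h]
      rcases ih with h0 | hm
      · left; exact h0
      · right; exact .tail _ hm

lemma dist_le_pairCost {d : ℕ} {A B : List (Pt d)} {p q : Pt d} (hp : p ∈ A) (hq : q ∈ B) :
    dist p q ≤ pairCost A B := by
  have h1 : dist p q ≤ (B.map fun q' => dist p q').foldr max 0 :=
    le_foldr_max (List.mem_map_of_mem hq)
  exact h1.trans (le_foldr_max (List.mem_map_of_mem hp))

lemma pairCost_le {d : ℕ} {A B : List (Pt d)} {c : ℝ} (hc : 0 ≤ c)
    (h : ∀ p ∈ A, ∀ q ∈ B, dist p q ≤ c) : pairCost A B ≤ c := by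
  refine foldr_max_le hc ?_
  intro a ha
  obtain ⟨p, hp, rfl⟩ := List.mem_map.mp ha
  refine foldr_max_le hc ?_
  intro b hb
  obtain ⟨q, hq, rfl⟩ := List.mem_map.mp hb
  exact h p hp q hq

lemma pairCost_cases {d : ℕ} (A B : List (Pt d)) :
    pairCost A B = 0 ∨ ∃ p ∈ A, ∃ q ∈ B, pairCost A B = dist p q := by
  unfold pairCost
  rcases foldr_max_mem ((A.map fun p => (B.map fun q => dist p q).foldr max 0)) with h | h
  · left; exact h
  · obtain ⟨p, hp, hpe⟩ := List.mem_map.mp h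
    rcases foldr_max_mem (B.map fun q => dist p q) with h0 | hm
    · left; rw [← hpe, h0]
    · obtain ⟨q, hq, hqe⟩ := List.mem_map.mp hm
      right; exact ⟨p, hp, q, hq, by rw [← hpe, ← hqe]⟩

lemma pairCost_le_walkCost {d : ℕ} {ω : List (List (Pt d) × List (Pt d))}
    {pr : List (Pt d) × List (Pt d)} (h : pr ∈ ω) : pairCost pr.1 pr.2 ≤ walkCost ω :=
  le_foldr_max (List.mem_map_of_mem h)

lemma walkCost_nonneg {d : ℕ} (ω : List (List (Pt d) × List (Pt d))) : 0 ≤ walkCost ω :=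
  foldr_max_nonneg _

lemma walkCost_le {d : ℕ} {ω : List (List (Pt d) × List (Pt d))} {c : ℝ} (hc : 0 ≤ c)
    (h : ∀ pr ∈ ω, pairCost pr.1 pr.2 ≤ c) : walkCost ω ≤ c := by
  refine foldr_max_le hc ?_
  intro a ha
  obtain ⟨pr, hpr, rfl⟩ := List.mem_map.mp ha
  exact h pr hpr

lemma walkCost_cases {d : ℕ} (ω : List (List (Pt d) × List (Pt d))) :
    walkCost ω = 0 ∨ ∃ pr ∈ ω, walkCost ω = pairCost pr.1 pr.2 := by
  unfold walkCost
  rcases foldr_max_mem (ω.map fun pr => pairCost pr.1 pr.2) with h | h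
  · left; exact h
  · obtain ⟨pr, hpr, hpe⟩ := List.mem_map.mp h
    right; exact ⟨pr, hpr, hpe.symm⟩

lemma flatten_map_singleton {α : Type*} (l : List α) :
    (l.map fun a => [a]).flatten = l := by
  induction l <;> simp [*]

lemma length_le_length_flatten {α : Type*} {L : List (List α)} (h : ∀ b ∈ L, b ≠ []) :
    L.length ≤ L.flatten.length := by
  induction L with
  | nil => simp
  | cons b t ih =>
    simp only [List.flatten_cons, List.length_append, List.length_cons]
    have hb : 1 ≤ b.length := List.length_pos_iff.mpr (h b (.head _))
    have := ih fun x hx => h x (.tail _ hx)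
    omega

lemma exists_walk {d : ℕ} (P Q : List (Pt d)) (hP : P ≠ []) (hQ : Q ≠ []) :
    ∃ ω, IsPairedWalk ω P Q := by
  by_cases h1 : P.length = 1 ∨ Q.length = 1
  · refine ⟨[(P, Q)], by simp [IsPairedWalk], ?_, ?_⟩ <;> simp [h1, hP, hQ]
  · push_neg at h1
    have hP2 : 2 ≤ P.length := by
      have := List.length_pos_iff.mpr hP; omega
    have hQ2 : 2 ≤ Q.length := by
      have := List.length_pos_iff.mpr hQ; omega
    refine ⟨[(P.dropLast, [Q.head hQ]), ([P.getLast hP], Q.tail)], ?_, ?_, ?_⟩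
    · simp [List.dropLast_append_getLast hP]
    · simp [List.cons_head_tail]
    · intro pr hpr
      rcases List.mem_cons.mp hpr with h | h
      · subst h
        refine ⟨?_, by simp, Or.inr rfl⟩
        intro hcon
        have := congrArg List.length hcon
        rw [List.length_dropLast] at this
        simp at this; omega
      · simp only [List.mem_singleton] at h
        subst h
        refine ⟨by simp, ?_, Or.inl rfl⟩
        intro hcon
        have := congrArg List.length hcon
        rw [List.length_tail] at this
        simp at this; omega

lemma mem_P_of_walk {d : ℕ} {ω : List (List (Pt d) × List (Pt d))} {P Q : List (Pt d)}
    (hω : IsPairedWalk ω P Q) {pr : List (Pt d) × List (Pt d)} (hpr : pr ∈ ω)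
    {p : Pt d} (hp : p ∈ pr.1) : p ∈ P := by
  rw [← hω.1]
  exact List.mem_flatten.mpr ⟨pr.1, List.mem_map_of_mem hpr, hp⟩

lemma mem_Q_of_walk {d : ℕ} {ω : List (List (Pt d) × List (Pt d))} {P Q : List (Pt d)}
    (hω : IsPairedWalk ω P Q) {pr : List (Pt d) × List (Pt d)} (hpr : pr ∈ ω)
    {q : Pt d} (hq : q ∈ pr.2) : q ∈ Q := by
  rw [← hω.2.1]
  exact List.mem_flatten.mpr ⟨pr.2, List.mem_map_of_mem hpr, hq⟩

lemma exists_min_walk {d : ℕ} (P Q : List (Pt d)) (hP : P ≠ []) (hQ : Q ≠ []) :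
    ∃ ω, IsPairedWalk ω P Q ∧ walkCost ω = dFr P Q := by
  have hne : Set.Nonempty {c : ℝ | ∃ ω, IsPairedWalk ω P Q ∧ walkCost ω = c} := by
    obtain ⟨ω, hω⟩ := exists_walk P Q hP hQ
    exact ⟨walkCost ω, ω, hω, rfl⟩
  have hfin : Set.Finite {c : ℝ | ∃ ω, IsPairedWalk ω P Q ∧ walkCost ω = c} := by
    apply Set.Finite.subset
      (Set.Finite.insert (0:ℝ) (Set.Finite.image2 dist P.finite_toSet Q.finite_toSet))
    rintro c ⟨ω, hω, rfl⟩
    rcases walkCost_cases ω with h0 | ⟨pr, hpr, hpe⟩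
    · rw [h0]; exact Set.mem_insert _ _
    · rcases pairCost_cases pr.1 pr.2 with h0 | ⟨p, hp, q, hq, hpc⟩
      · rw [hpe, h0]; exact Set.mem_insert _ _
      · refine Set.mem_insert_of_mem _ ?_
        exact ⟨p, mem_P_of_walk hω hpr hp, q, mem_Q_of_walk hω hpr hq, by rw [hpe, hpc]⟩
  have := hne.csInf_mem hfin
  obtain ⟨ω, hω, hc⟩ := this
  exact ⟨ω, hω, hc⟩

/-- The minimum length of a curve within discrete Fréchet distance `δ` of `P` equals the
minimum number of consecutive nonempty blocks partitioning `P`, each of which is contained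
in a closed Euclidean ball of radius `δ`. -/
theorem delta_simplification_eq_min_blocks {d : ℕ} (P : List (Pt d)) (hP : P ≠ [])
    (δ : ℝ) (hδ : 0 < δ) :
    sInf {n : ℕ | ∃ Γ : List (Pt d), Γ ≠ [] ∧ Γ.length = n ∧ dFr P Γ ≤ δ} =
    sInf {t : ℕ | ∃ Bs : List (List (Pt d)), Bs.length = t ∧ Bs.flatten = P ∧
      ∀ b ∈ Bs, b ≠ [] ∧ ∃ c : Pt d, ∀ p ∈ b, dist p c ≤ δ} := by
  classical
  set L := {n : ℕ | ∃ Γ : List (Pt d), Γ ≠ [] ∧ Γ.length = n ∧ dFr P Γ ≤ δ} with hLdef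
  set R := {t : ℕ | ∃ Bs : List (List (Pt d)), Bs.length = t ∧ Bs.flatten = P ∧
      ∀ b ∈ Bs, b ≠ [] ∧ ∃ c : Pt d, ∀ p ∈ b, dist p c ≤ δ} with hRdef
  have hRL : R ⊆ L := by
    rintro t ⟨Bs, hlen, hflat, hblocks⟩
    have hBsne : Bs ≠ [] := by rintro rfl; exact hP hflat.symm
    let f : List (Pt d) → Pt d := fun b =>
      if h : ∃ c : Pt d, ∀ p ∈ b, dist p c ≤ δ then h.choose else 0
    have hf : ∀ b ∈ Bs, ∀ p ∈ b, dist p (f b) ≤ δ := by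
      intro b hb
      have h := (hblocks b hb).2
      simp only [f, dif_pos h]
      exact h.choose_spec
    have hΓne : Bs.map f ≠ [] := by simpa using hBsne
    have hwalk : IsPairedWalk (Bs.map (fun b => (b, [f b]))) P (Bs.map f) := by
      refine ⟨?_, ?_, ?_⟩
      · rw [List.map_map, show (Prod.fst ∘ fun b => (b, [f b])) = id from rfl, List.map_id]
        exact hflat
      · rw [List.map_map]
        rw [show (Prod.snd ∘ fun b => (b, [f b])) = (fun a => [a]) ∘ f from rfl,
          ← List.map_map, flatten_map_singleton]
      · intro pr hpr
        obtain ⟨b, hb, rfl⟩ := List.mem_map.mp hpr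
        exact ⟨(hblocks b hb).1, by simp, Or.inr rfl⟩
    have hcost : walkCost (Bs.map (fun b => (b, [f b]))) ≤ δ := by
      refine walkCost_le hδ.le ?_
      intro pr hpr
      obtain ⟨b, hb, rfl⟩ := List.mem_map.mp hpr
      refine pairCost_le hδ.le ?_
      intro p hp q hq
      simp only [List.mem_singleton] at hq
      subst hq
      exact hf b hb p hp
    have hdfr : dFr P (Bs.map f) ≤ δ := by
      refine le_trans (csInf_le ⟨0, ?_⟩ ⟨_, hwalk, rfl⟩) hcost
      rintro c ⟨ω', _, rfl⟩
      exact walkCost_nonneg ω'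
    exact ⟨Bs.map f, hΓne, by simpa using hlen, hdfr⟩
  have hRne : R.Nonempty := by
    refine ⟨P.length, P.map (fun p => [p]), by simp, flatten_map_singleton P, ?_⟩
    intro b hb
    obtain ⟨p, hp, rfl⟩ := List.mem_map.mp hb
    refine ⟨by simp, p, ?_⟩
    intro x hx
    simp only [List.mem_singleton] at hx
    subst hx
    simp [hδ.le]
  have hLne : L.Nonempty := ⟨hRne.choose, hRL hRne.choose_spec⟩
  have hfor : ∀ n ∈ L, ∃ t ∈ R, t ≤ n := by
    rintro n ⟨Γ, hΓne, hΓlen, hdfr⟩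
    obtain ⟨ω, hω, hcost⟩ := exists_min_walk P Γ hP hΓne
    have hcδ : walkCost ω ≤ δ := by rw [hcost]; exact hdfr
    refine ⟨ω.length, ⟨ω.map Prod.fst, by simp, hω.1, ?_⟩, ?_⟩
    · intro b hb
      obtain ⟨pr, hpr, rfl⟩ := List.mem_map.mp hb
      have h2 := hω.2.2 pr hpr
      refine ⟨h2.1, pr.2.head h2.2.1, ?_⟩
      intro p hp
      calc dist p (pr.2.head h2.2.1) ≤ pairCost pr.1 pr.2 :=
            dist_le_pairCost hp (List.head_mem _)
        _ ≤ walkCost ω := pairCost_le_walkCost hpr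
        _ ≤ δ := hcδ
    · have h1 : (ω.map Prod.snd).length ≤ (ω.map Prod.snd).flatten.length := by
        refine length_le_length_flatten ?_
        intro b hb
        obtain ⟨pr, hpr, rfl⟩ := List.mem_map.mp hb
        exact (hω.2.2 pr hpr).2.1
      rw [hω.2.1, hΓlen] at h1
      simpa using h1
  apply le_antisymm
  · exact Nat.sInf_le (hRL (Nat.sInf_mem hRne))
  · obtain ⟨t, htR, htle⟩ := hfor _ (Nat.sInf_mem hLne)
    exact le_trans (Nat.sInf_le htR) htle
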